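/- For every integer p ≥ 3 and every fixed β > β*(p), the set of all β_0 > β*(p) for which sup_{x ∈ η_p^{−1}((β,∞))} H_{β_0,p}(x) > sup_{x ∈ (m_*(β,p), 1]} H_{β_0,p}(x) (equivalently, for which the maximum pseudolikelihood test is strictly less Bahadur efficient than the maximum likelihood test) is exactly the open interval (β*(p), I(m_*(β,p)) / m_*(β,p)^p). -/

import Mathlib

open Real Set Filter

/-- `I(x) = ½[(1+x)log(1+x) + (1−x)log(1−x)]` (with `Real.log 0 = 0`). -/
noncomputable def bahI (x : ℝ) : ℝ :=
  ((1 + x) * Real.log (1 + x) + (1 - x) * Real.log (1 - x)) / 2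

/-- `H_{β,p}(x) = β xᵖ − I(x)`. -/
noncomputable def bahH (β : ℝ) (p : ℕ) (x : ℝ) : ℝ := β * x ^ p - bahI x

/-- `β*(p) = sup {β ≥ 0 : sup_{x∈[−1,1]} H_{β,p}(x) = 0}`. -/
noncomputable def betaStar (p : ℕ) : ℝ :=
  sSup {β : ℝ | 0 ≤ β ∧ sSup (bahH β p '' Set.Icc (-1 : ℝ) 1) = 0}

/-- inverse hyperbolic tangent. -/
noncomputable def arctanh (x : ℝ) : ℝ := Real.log ((1 + x) / (1 - x)) / 2

/-- `η_p(t) = p⁻¹ t^{1−p} arctanh t` for `t ≠ 0`, and `η_p(0) = 0`. -/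
noncomputable def etaFn (p : ℕ) (t : ℝ) : ℝ :=
  if t = 0 then 0 else (p : ℝ)⁻¹ * t ^ (1 - (p : ℤ)) * arctanh t

open Topology

/-!
Write `T = η_p⁻¹((β, ∞))`. For `0 < x < 1` one has `H_{β,p}'(x) = p x^{p-1} (β - η_p(x))`, so `T`
is where `H_{β,p}` decreases.

If `H_{β₀,p}(m) < 0`, i.e. `β₀ < I(m)/mᵖ`, then `β₀ < β` and `H_{β₀,p} ≤ H_{β₀,p}(m) < 0` on
`(m, 1]`, whereas `T` contains a right neighbourhood of `0` (there `η_p → ∞` because `p ≥ 3`) on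
which `H_{β₀,p}` is close to `H_{β₀,p}(0) = 0`.

If `H_{β₀,p}(m) ≥ 0`, every point of `T` is dominated by `H_{β₀,p}(m)` or by a point of `(m, 1]`.
By symmetry only `0 < t ≤ m` matters; for `β₀ > β` maximality of `m` suffices, and for `β₀ ≤ β`
the key fact is `H_{β,p}(t) ≤ 0`. Otherwise `H_{β,p}` increases somewhere in `(0, t)`, where
`η_p < β`, while `η_p(m) = β`; but `η_p` is quasiconvex on `(0, 1)`, because the sign of `η_p'` is
that of `1 - (p - 1)(1 - x²) arctanh x / x` and this expression increases. Hence `η_p(t) ≤ β`,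
contradicting `t ∈ T`.
-/

theorem le_csSup_image_of_tendsto {α : Type*} {l : Filter α} [l.NeBot] {f : α → ℝ} {y : ℝ}
    {s : Set α} (hf : Tendsto f l (𝓝 y)) (hs : ∀ᶠ x in l, x ∈ s) (hbdd : BddAbove (f '' s)) :
    y ≤ sSup (f '' s) :=
  le_of_tendsto hf (hs.mono fun _ hx => le_csSup hbdd (mem_image_of_mem f hx))

theorem quasiconvexOn_of_hasDerivAt {s : Set ℝ} (hs : s.OrdConnected) {f f' : ℝ → ℝ}
    (hf : ∀ x ∈ s, HasDerivAt f (f' x) x)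
    (hf' : ∀ x ∈ s, ∀ y ∈ s, x < y → f' x = 0 → 0 < f' y) : QuasiconvexOn ℝ s f := by
  intro r
  rw [convex_iff_ordConnected]
  refine ⟨fun x hx z hz y hy => ⟨hs.out hx.1 hz.1 hy, ?_⟩⟩
  by_contra! hry
  -- a maximum of `f` on `[x, z]` is then an interior critical point, after which `f` increases
  have hxz : Icc x z ⊆ s := hs.out hx.1 hz.1
  have hcont : ContinuousOn f (Icc x z) := fun w hw =>
    (hf w (hxz hw)).continuousAt.continuousWithinAt
  obtain ⟨c, hc, hcmax⟩ := isCompact_Icc.exists_isMaxOn (nonempty_Icc.2 (hy.1.trans hy.2)) hcont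
  have hyc : f y ≤ f c := hcmax hy
  have hxc : x < c := lt_of_le_of_ne hc.1 (by rintro rfl; linarith [hx.2])
  have hcz : c < z := lt_of_le_of_ne hc.2 (by rintro rfl; linarith [hz.2])
  have hcrit : f' c = 0 :=
    (hcmax.isLocalMax (Icc_mem_nhds hxc hcz)).hasDerivAt_eq_zero (hf c (hxz hc))
  have hmono : StrictMonoOn f (Icc c z) := by
    refine strictMonoOn_of_hasDerivWithinAt_pos (f' := f') (convex_Icc c z)
      (hcont.mono (Icc_subset_Icc_left hc.1)) (fun w hw => ?_) (fun w hw => ?_)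
    all_goals rw [interior_Icc] at hw
    · exact (hf w (hxz ⟨hxc.le.trans hw.1.le, hw.2.le⟩)).hasDerivWithinAt
    · exact hf' c (hxz hc) w (hxz ⟨hxc.le.trans hw.1.le, hw.2.le⟩) hw.1 hcrit
  have := hmono (left_mem_Icc.2 hcz.le) (right_mem_Icc.2 hcz.le) hcz
  linarith [hz.2]

theorem arctanh_eq_artanh {x : ℝ} (hx : x ∈ Icc (-1) 1) : arctanh x = artanh x := by
  rw [artanh_eq_half_log hx, arctanh]
  ring

theorem arctanh_neg (x : ℝ) : arctanh (-x) = -arctanh x := by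
  rw [arctanh, arctanh, ← sub_eq_add_neg, sub_neg_eq_add,
    show (1 - x) / (1 + x) = ((1 + x) / (1 - x))⁻¹ from (inv_div _ _).symm, log_inv]
  ring

theorem arctanh_eq_log_sub_log {x : ℝ} (h1 : -1 < x) (h2 : x < 1) :
    arctanh x = (log (1 + x) - log (1 - x)) / 2 := by
  rw [arctanh, log_div (by linarith) (by linarith)]

theorem hasDerivAt_arctanh {x : ℝ} (h1 : -1 < x) (h2 : x < 1) :
    HasDerivAt arctanh (1 / (1 - x ^ 2)) x := by
  have hp : HasDerivAt (fun y => 1 + y) 1 x := (hasDerivAt_id x).const_add 1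
  have hm : HasDerivAt (fun y => 1 - y) (-1) x := (hasDerivAt_id x).const_sub 1
  have h := ((hp.log (by linarith)).sub (hm.log (by linarith))).div_const 2
  refine (h.congr_of_eventuallyEq (eventually_of_mem (Ioo_mem_nhds h1 h2)
    fun y hy => arctanh_eq_log_sub_log hy.1 hy.2)).congr_deriv ?_
  have h1' : 1 + x ≠ 0 := by linarith
  have h2' : 1 - x ≠ 0 := by linarith
  have h3 : 1 - x ^ 2 ≠ 0 := by nlinarith
  field_simp
  ring

theorem self_lt_arctanh {x : ℝ} (h0 : 0 < x) (h1 : x < 1) : x < arctanh x := by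
  have hsum := hasSum_log_sub_log_of_abs_lt_one (abs_lt.2 ⟨by linarith, h1⟩)
  have h := sum_le_hasSum (Finset.range 2) (fun k _ => by positivity) hsum
  norm_num [Finset.sum_range_succ] at h
  rw [arctanh_eq_log_sub_log (by linarith) h1]
  nlinarith [pow_pos h0 3]

theorem strictAntiOn_one_sub_sq_mul_arctanh_div :
    StrictAntiOn (fun x => (1 - x ^ 2) * arctanh x / x) (Ioo 0 1) := by
  have hd : ∀ x ∈ Ioo (0 : ℝ) 1, HasDerivAt (fun x => (1 - x ^ 2) * arctanh x / x)
      ((x - (1 + x ^ 2) * arctanh x) / x ^ 2) x := by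
    intro x hx
    have hq : HasDerivAt (fun y : ℝ => 1 - y ^ 2) (-(2 * x)) x := by
      simpa using (hasDerivAt_pow 2 x).const_sub 1
    refine ((hq.mul (hasDerivAt_arctanh (by linarith [hx.1]) hx.2)).div (hasDerivAt_id' x)
      hx.1.ne').congr_deriv ?_
    have : 1 - x ^ 2 ≠ 0 := by nlinarith [hx.1, hx.2]
    simp only [Pi.mul_apply]
    field_simp
    ring
  refine strictAntiOn_of_hasDerivWithinAt_neg (convex_Ioo 0 1)
    (f' := fun x => (x - (1 + x ^ 2) * arctanh x) / x ^ 2)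
    (fun x hx => (hd x hx).continuousAt.continuousWithinAt) (fun x hx => ?_) (fun x hx => ?_)
  all_goals rw [interior_Ioo] at hx
  · exact (hd x hx).hasDerivWithinAt
  · have hA := self_lt_arctanh hx.1 hx.2
    have := mul_pos (pow_pos hx.1 2) (hx.1.trans hA)
    exact div_neg_of_neg_of_pos (by linarith) (pow_pos hx.1 2)

theorem continuous_bahI : Continuous bahI := by
  have c1 : Continuous fun x : ℝ => (1 + x) * log (1 + x) :=
    continuous_mul_log.comp (continuous_const.add continuous_id)
  have c2 : Continuous fun x : ℝ => (1 - x) * log (1 - x) :=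
    continuous_mul_log.comp (continuous_const.sub continuous_id)
  exact (c1.add c2).div_const 2

theorem continuous_bahH (β : ℝ) (p : ℕ) : Continuous (bahH β p) :=
  (continuous_const.mul (continuous_pow p)).sub continuous_bahI

theorem hasDerivAt_bahI {x : ℝ} (h1 : -1 < x) (h2 : x < 1) : HasDerivAt bahI (arctanh x) x := by
  have hp := (hasDerivAt_mul_log (x := 1 + x) (by linarith)).comp x
    ((hasDerivAt_id x).const_add 1)
  have hm := (hasDerivAt_mul_log (x := 1 - x) (by linarith)).comp x
    ((hasDerivAt_id x).const_sub 1)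
  refine ((hp.add hm).div_const 2).congr_deriv ?_
  rw [arctanh_eq_log_sub_log h1 h2]
  ring

theorem hasDerivAt_bahH (β : ℝ) (p : ℕ) {x : ℝ} (h1 : -1 < x) (h2 : x < 1) :
    HasDerivAt (bahH β p) (β * p * x ^ (p - 1) - arctanh x) x :=
  (((hasDerivAt_pow p x).const_mul β).sub (hasDerivAt_bahI h1 h2)).congr_deriv (by ring)

theorem bahH_zero (β : ℝ) {p : ℕ} (hp : p ≠ 0) : bahH β p 0 = 0 := by
  simp [bahH, bahI, hp]

theorem bahH_sub_bahH (β β₀ : ℝ) (p : ℕ) (x : ℝ) :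
    bahH β p x - bahH β₀ p x = (β - β₀) * x ^ p := by
  unfold bahH
  ring

theorem bahI_neg (x : ℝ) : bahI (-x) = bahI x := by
  rw [bahI, bahI, ← sub_eq_add_neg, sub_neg_eq_add]
  ring

theorem bahH_le_bahH_abs {β : ℝ} (hβ : 0 ≤ β) (p : ℕ) (x : ℝ) : bahH β p x ≤ bahH β p |x| := by
  have hI : bahI |x| = bahI x := by
    rcases abs_choice x with h | h <;> rw [h]
    exact bahI_neg x
  have hpow : x ^ p ≤ |x| ^ p := pow_abs x p ▸ le_abs_self (x ^ p)
  rw [bahH, bahH, hI]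
  nlinarith

theorem etaFn_zero (p : ℕ) : etaFn p 0 = 0 := if_pos rfl

theorem etaFn_neg (p : ℕ) (x : ℝ) : etaFn p (-x) = (-1) ^ p * etaFn p x := by
  rcases eq_or_ne x 0 with rfl | hx
  · simp [etaFn]
  rw [etaFn, etaFn, if_neg (neg_ne_zero.2 hx), if_neg hx, arctanh_neg, neg_eq_neg_one_mul x,
    mul_zpow, zpow_sub₀ (by norm_num : (-1 : ℝ) ≠ 0), zpow_natCast]
  rcases neg_one_pow_eq_or ℝ p with h | h <;> rw [h] <;> ring

theorem etaFn_nonneg (p : ℕ) {x : ℝ} (h0 : 0 ≤ x) (h1 : x ≤ 1) : 0 ≤ etaFn p x := by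
  unfold etaFn
  split_ifs
  · rfl
  · rw [arctanh_eq_artanh ⟨by linarith, h1⟩]
    have := artanh_nonneg h0
    have := zpow_nonneg h0 (1 - (p : ℤ))
    positivity

theorem etaFn_le_etaFn_abs (p : ℕ) {x : ℝ} (hx : x ∈ Icc (-1) 1) : etaFn p x ≤ etaFn p |x| := by
  rcases le_or_gt 0 x with h | h
  · rw [abs_of_nonneg h]
  have hnn : 0 ≤ etaFn p |x| := etaFn_nonneg p (abs_nonneg x) (abs_le.2 hx)
  rw [abs_of_neg h, etaFn_neg] at hnn ⊢
  rcases neg_one_pow_eq_or ℝ p with h | h <;> rw [h] at hnn ⊢ <;> linarith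

theorem mul_pow_mul_etaFn {p : ℕ} (hp : p ≠ 0) {x : ℝ} (hx : x ≠ 0) :
    p * x ^ (p - 1) * etaFn p x = arctanh x := by
  have h : (1 - (p : ℤ)) = -((p - 1 : ℕ) : ℤ) := by omega
  rw [etaFn, if_neg hx, h, zpow_neg, zpow_natCast]
  field_simp

theorem hasDerivAt_bahH_of_ne_zero (β : ℝ) {p : ℕ} (hp : p ≠ 0) {x : ℝ} (h1 : -1 < x) (h2 : x < 1)
    (hx : x ≠ 0) : HasDerivAt (bahH β p) (p * x ^ (p - 1) * (β - etaFn p x)) x :=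
  (hasDerivAt_bahH β p h1 h2).congr_deriv (by rw [← mul_pow_mul_etaFn hp hx]; ring)

theorem hasDerivAt_etaFn {p : ℕ} (hp : p ≠ 0) {x : ℝ} (h0 : 0 < x) (h1 : x < 1) :
    HasDerivAt (etaFn p)
      ((x - (p - 1) * (1 - x ^ 2) * arctanh x) / (p * x ^ p * (1 - x ^ 2))) x := by
  have h := (((hasDerivAt_zpow (1 - (p : ℤ)) x (Or.inl h0.ne')).const_mul (p : ℝ)⁻¹).mul
    (hasDerivAt_arctanh (by linarith) h1))
  refine (h.congr_of_eventuallyEq (eventually_of_mem (Ioi_mem_nhds h0)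
    fun y hy => if_neg (ne_of_gt hy))).congr_deriv ?_
  have hsq : 1 - x ^ 2 ≠ 0 := by nlinarith
  have hp' : (p : ℝ) ≠ 0 := Nat.cast_ne_zero.2 hp
  rw [zpow_sub₀ h0.ne', zpow_sub₀ h0.ne', zpow_one, zpow_natCast]
  push_cast
  field_simp
  ring

theorem quasiconvexOn_etaFn {p : ℕ} (hp : 2 ≤ p) : QuasiconvexOn ℝ (Ioo 0 1) (etaFn p) := by
  have hp0 : p ≠ 0 := by omega
  have hp1 : (1 : ℝ) < p := by exact_mod_cast hp
  refine quasiconvexOn_of_hasDerivAt ordConnected_Ioo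
    (fun x hx => hasDerivAt_etaFn hp0 hx.1 hx.2) fun x hx y hy hxy hcrit => ?_
  have hdx : 0 < p * x ^ p * (1 - x ^ 2) := by
    have := pow_pos hx.1 p
    have : 0 < 1 - x ^ 2 := by nlinarith [hx.1, hx.2]
    positivity
  have hdy : 0 < p * y ^ p * (1 - y ^ 2) := by
    have := pow_pos hy.1 p
    have : 0 < 1 - y ^ 2 := by nlinarith [hy.1, hy.2]
    positivity
  rw [div_eq_zero_iff, or_iff_left hdx.ne'] at hcrit
  -- at a critical point `(p - 1) (1 - x²) arctanh x / x = 1`, and this quotient decreases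
  have hanti := strictAntiOn_one_sub_sq_mul_arctanh_div hx hy hxy
  have hx' : (p - 1) * ((1 - x ^ 2) * arctanh x / x) = 1 := by
    field_simp [hx.1.ne']
    linarith
  have hy' : (p - 1) * ((1 - y ^ 2) * arctanh y / y) < 1 :=
    (mul_lt_mul_of_pos_left hanti (sub_pos.2 hp1)).trans_eq hx'
  refine div_pos ?_ hdy
  rw [mul_div_assoc', div_lt_one hy.1] at hy'
  linarith

theorem tendsto_etaFn_nhdsGT_zero {p : ℕ} (hp : 3 ≤ p) : Tendsto (etaFn p) (𝓝[>] 0) atTop := by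
  have hp0 : (0 : ℝ) < p := by positivity
  refine tendsto_atTop_mono' _ ?_ (tendsto_inv_nhdsGT_zero.const_mul_atTop (inv_pos.2 hp0))
  filter_upwards [Ioo_mem_nhdsGT (zero_lt_one' ℝ)] with x hx
  have key := mul_pow_mul_etaFn (p := p) (by omega) hx.1.ne'
  have hlt := self_lt_arctanh hx.1 hx.2
  have hnn := etaFn_nonneg p hx.1.le hx.2.le
  have hpow : x ^ (p - 1) ≤ x ^ 2 := pow_le_pow_of_le_one hx.1.le hx.2.le (by omega)
  have hx2 : x * 1 < x * (p * x * etaFn p x) := by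
    nlinarith [mul_le_mul_of_nonneg_right hpow (mul_nonneg hp0.le hnn)]
  rw [← mul_inv, inv_le_iff_one_le_mul₀ (mul_pos hp0 hx.1)]
  nlinarith [lt_of_mul_lt_mul_left hx2 hx.1.le]

theorem not_isMaxOn_bahH_one {β : ℝ} (hβ : 0 ≤ β) (p : ℕ) :
    ¬ IsMaxOn (bahH β p) (Icc (-1) 1) 1 := by
  intro hmax
  have hx₀0 : 0 ≤ tanh (β * p) := by
    rw [tanh_eq_sinh_div_cosh]
    exact div_nonneg (sinh_nonneg_iff.2 (by positivity)) (cosh_pos _).le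
  set x₀ := tanh (β * p)
  have hx₀ : x₀ ∈ Ioo (-1) 1 := ⟨neg_one_lt_tanh _, tanh_lt_one _⟩
  obtain ⟨ξ, hξ, hslope⟩ := exists_hasDerivAt_eq_slope (bahH β p)
    (fun x => β * p * x ^ (p - 1) - arctanh x) hx₀.2 (continuous_bahH β p).continuousOn
    fun x hx => hasDerivAt_bahH β p (by linarith [hx.1, hx₀.1]) hx.2
  have hderiv : 0 ≤ β * p * ξ ^ (p - 1) - arctanh ξ := by
    rw [hslope]
    exact div_nonneg (sub_nonneg.2 (hmax ⟨hx₀.1.le, hx₀.2.le⟩)) (sub_nonneg.2 hx₀.2.le)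
  have hpow : β * p * ξ ^ (p - 1) ≤ β * p :=
    mul_le_of_le_one_right (by positivity) (pow_le_one₀ (by linarith [hξ.1]) hξ.2.le)
  have hart : β * p < arctanh ξ := by
    rw [arctanh_eq_artanh ⟨by linarith [hξ.1], hξ.2.le⟩, ← artanh_tanh (β * p)]
    exact artanh_lt_artanh hx₀.1 hξ.2 hξ.1
  linarith

theorem bahH_le_of_isMaxOn {β β₀ m x : ℝ} {p : ℕ} (hmax : IsMaxOn (bahH β p) (Icc (-1) 1) m)
    (hx : x ∈ Icc (-1) 1) (h : 0 ≤ (β - β₀) * (x ^ p - m ^ p)) : bahH β₀ p x ≤ bahH β₀ p m := by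
  have : bahH β p x ≤ bahH β p m := hmax hx
  have := bahH_sub_bahH β β₀ p x
  have := bahH_sub_bahH β β₀ p m
  rw [mul_sub] at h
  linarith

theorem bahH_nonpos_of_lt_etaFn {β m t : ℝ} {p : ℕ} (hp : 2 ≤ p) (hm1 : m < 1)
    (hmax : IsMaxOn (bahH β p) (Icc (-1) 1) m) (ht0 : 0 < t) (htm : t < m)
    (hη : β < etaFn p t) : bahH β p t ≤ 0 := by
  have hp0 : p ≠ 0 := by omega
  by_contra! hpos
  obtain ⟨ξ, hξ, hslope⟩ := exists_hasDerivAt_eq_slope (bahH β p)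
    (fun x => p * x ^ (p - 1) * (β - etaFn p x)) ht0 (continuous_bahH β p).continuousOn
    fun x hx => hasDerivAt_bahH_of_ne_zero β hp0 (by linarith [hx.1]) (by linarith [hx.2]) hx.1.ne'
  rw [bahH_zero β hp0, sub_zero, sub_zero] at hslope
  have hξη : etaFn p ξ ≤ β := by
    have := pos_of_mul_pos_right (hslope ▸ div_pos hpos ht0) (by have := hξ.1; positivity)
    linarith
  have hmη : etaFn p m ≤ β := by
    have hcrit := (hmax.isLocalMax (Icc_mem_nhds (by linarith) hm1)).hasDerivAt_eq_zero
      (hasDerivAt_bahH_of_ne_zero β hp0 (by linarith) hm1 (by linarith : 0 < m).ne')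
    have hm0 : (p : ℝ) * m ^ (p - 1) ≠ 0 :=
      mul_ne_zero (Nat.cast_ne_zero.2 hp0) (pow_ne_zero _ (by linarith))
    linarith [(mul_eq_zero.1 hcrit).resolve_left hm0]
  have hmem := ((quasiconvexOn_etaFn hp β).ordConnected).out ⟨⟨hξ.1, by linarith [hξ.2]⟩, hξη⟩
    ⟨⟨by linarith, hm1⟩, hmη⟩ ⟨hξ.2.le, htm.le⟩
  exact hη.not_ge hmem.2

theorem bddAbove_bahH_image (β : ℝ) (p : ℕ) {s : Set ℝ} (hs : s ⊆ Icc (-1) 1) :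
    BddAbove (bahH β p '' s) :=
  (isCompact_Icc.image (continuous_bahH β p)).bddAbove.mono (image_mono hs)

theorem eventually_mem_etaFn_superlevel {p : ℕ} (hp : 3 ≤ p) (β : ℝ) :
    ∀ᶠ t in 𝓝[>] 0, t ∈ {t ∈ Icc (-1 : ℝ) 1 | β < etaFn p t} := by
  filter_upwards [(tendsto_etaFn_nhdsGT_zero hp).eventually_gt_atTop β,
    Ioo_mem_nhdsGT (zero_lt_one' ℝ)] with t hη ht
  exact ⟨⟨by linarith [ht.1], ht.2.le⟩, hη⟩

theorem sSup_bahH_etaFn_superlevel_nonneg {p : ℕ} (hp : 3 ≤ p) (β β₀ : ℝ) :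
    0 ≤ sSup (bahH β₀ p '' {t ∈ Icc (-1 : ℝ) 1 | β < etaFn p t}) := by
  rw [← bahH_zero β₀ (by omega : p ≠ 0)]
  exact le_csSup_image_of_tendsto
    ((continuous_bahH β₀ p).continuousAt.tendsto.mono_left nhdsWithin_le_nhds)
    (eventually_mem_etaFn_superlevel hp β) (bddAbove_bahH_image β₀ p fun _ ht => ht.1)

theorem sSup_bahH_Ioc_le {β β₀ m : ℝ} {p : ℕ} (hmax : IsMaxOn (bahH β p) (Icc (-1) 1) m)
    (hm0 : 0 ≤ m) (hm1 : m < 1) (hβ₀ : β₀ ≤ β) :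
    sSup (bahH β₀ p '' Ioc m 1) ≤ bahH β₀ p m := by
  refine csSup_le ⟨_, mem_image_of_mem _ (right_mem_Ioc.2 hm1)⟩ ?_
  rintro _ ⟨x, hx, rfl⟩
  exact bahH_le_of_isMaxOn hmax ⟨by linarith [hx.1], hx.2⟩
    (mul_nonneg (sub_nonneg.2 hβ₀) (sub_nonneg.2 (pow_le_pow_left₀ hm0 hx.1.le p)))

theorem bahH_le_bahH_of_lt_etaFn {β β₀ m u : ℝ} {p : ℕ} (hp : 2 ≤ p) (hm1 : m < 1)
    (hmax : IsMaxOn (bahH β p) (Icc (-1) 1) m) (hHm : 0 ≤ bahH β₀ p m) (hu0 : 0 < u)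
    (hum : u ≤ m) (hu : β < etaFn p u) : bahH β₀ p u ≤ bahH β₀ p m := by
  rcases hum.lt_or_eq with hum | rfl
  · rcases le_or_gt β₀ β with hβ₀ | hβ₀
    · calc bahH β₀ p u ≤ bahH β p u := by
            linarith [bahH_sub_bahH β β₀ p u, mul_nonneg (sub_nonneg.2 hβ₀) (pow_pos hu0 p).le]
        _ ≤ bahH β₀ p m := (bahH_nonpos_of_lt_etaFn hp hm1 hmax hu0 hum hu).trans hHm
    · exact bahH_le_of_isMaxOn hmax ⟨by linarith, by linarith⟩ (mul_nonneg_of_nonpos_of_nonpos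
        (by linarith) (sub_nonpos.2 (pow_le_pow_left₀ hu0.le hum.le p)))
  · exact le_rfl

theorem sSup_bahH_etaFn_superlevel_le {β β₀ m : ℝ} {p : ℕ} (hp : 3 ≤ p) (hβ : 0 < β)
    (hβ₀ : 0 ≤ β₀) (hm0 : 0 < m) (hm1 : m < 1) (hmax : IsMaxOn (bahH β p) (Icc (-1) 1) m)
    (hHm : 0 ≤ bahH β₀ p m) :
    sSup (bahH β₀ p '' {t ∈ Icc (-1 : ℝ) 1 | β < etaFn p t}) ≤ sSup (bahH β₀ p '' Ioc m 1) := by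
  have hbdd := bddAbove_bahH_image β₀ p fun x (hx : x ∈ Ioc m 1) => ⟨by linarith [hx.1], hx.2⟩
  have hmS : bahH β₀ p m ≤ sSup (bahH β₀ p '' Ioc m 1) := le_csSup_image_of_tendsto
    ((continuous_bahH β₀ p).continuousAt.tendsto.mono_left nhdsWithin_le_nhds)
    (Ioc_mem_nhdsGT hm1) hbdd
  refine csSup_le (Nonempty.image _ (eventually_mem_etaFn_superlevel hp β).exists) ?_
  rintro _ ⟨t, ⟨ht, hηt⟩, rfl⟩
  have hη : β < etaFn p |t| := hηt.trans_le (etaFn_le_etaFn_abs p ht)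
  have ht0 : 0 < |t| := abs_pos.2 (by rintro rfl; rw [etaFn_zero] at hηt; linarith)
  refine (bahH_le_bahH_abs hβ₀ p t).trans ?_
  rcases lt_or_ge m |t| with hmt | htm
  · exact le_csSup hbdd (mem_image_of_mem _ ⟨hmt, abs_le.2 ht⟩)
  · exact (bahH_le_bahH_of_lt_etaFn (by omega) hm1 hmax hHm ht0 htm hη).trans hmS

theorem sSup_bahH_Ioc_lt_sSup_bahH_etaFn_superlevel_iff {β β₀ m : ℝ} {p : ℕ} (hp : 3 ≤ p)
    (hβ : 0 < β) (hβ₀ : 0 ≤ β₀) (hm0 : 0 < m) (hm1 : m < 1)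
    (hmax : IsMaxOn (bahH β p) (Icc (-1) 1) m) :
    sSup (bahH β₀ p '' Ioc m 1) < sSup (bahH β₀ p '' {t ∈ Icc (-1 : ℝ) 1 | β < etaFn p t}) ↔
      bahH β₀ p m < 0 := by
  constructor
  · intro h
    by_contra! hHm
    exact (sSup_bahH_etaFn_superlevel_le hp hβ hβ₀ hm0 hm1 hmax hHm).not_gt h
  · intro hHm
    have hβ₀β : β₀ ≤ β := by
      have h0 : bahH β p 0 ≤ bahH β p m := hmax ⟨by norm_num, by norm_num⟩
      rw [bahH_zero β (by omega)] at h0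
      have := bahH_sub_bahH β β₀ p m
      nlinarith [pow_pos hm0 p]
    calc sSup (bahH β₀ p '' Ioc m 1) ≤ bahH β₀ p m := sSup_bahH_Ioc_le hmax hm0.le hm1 hβ₀β
      _ < 0 := hHm
      _ ≤ _ := sSup_bahH_etaFn_superlevel_nonneg hp β β₀

/-- For `p ≥ 3` and a fixed `β > β*(p)` with positive global maximizer `m = m_*(β,p)` of
`H_{β,p}` on `[−1,1]`: the set of `β₀ > β*(p)` for which
`sup_{x ∈ η_p⁻¹((β,∞))} H_{β₀,p}(x) > sup_{x ∈ (m, 1]} H_{β₀,p}(x)` is exactly the open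
interval `(β*(p), I(m)/mᵖ)`. -/
theorem statement11 (p : ℕ) (hp : 3 ≤ p) (β : ℝ) (hβ : betaStar p < β)
    (m : ℝ) (hm0 : 0 < m) (hm1 : m ∈ Set.Icc (-1 : ℝ) 1)
    (hmax : IsMaxOn (bahH β p) (Set.Icc (-1 : ℝ) 1) m) :
    {β₀ : ℝ | betaStar p < β₀ ∧
        sSup (bahH β₀ p '' Set.Ioc m 1)
          < sSup (bahH β₀ p '' {t ∈ Set.Icc (-1 : ℝ) 1 | β < etaFn p t})}
      = Set.Ioo (betaStar p) (bahI m / m ^ p) := by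
  have hβs : 0 ≤ betaStar p := Real.sSup_nonneg fun _ h => h.1
  have hβ0 : 0 < β := hβs.trans_lt hβ
  have hm1' : m < 1 :=
    hm1.2.lt_of_ne (by rintro rfl; exact not_isMaxOn_bahH_one hβ0.le p hmax)
  ext β₀
  refine and_congr_right fun hβ₀ => ?_
  rw [sSup_bahH_Ioc_lt_sSup_bahH_etaFn_superlevel_iff hp hβ0 (hβs.trans hβ₀.le) hm0 hm1' hmax,
    lt_div_iff₀ (pow_pos hm0 p), bahH, sub_neg]
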